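/- arXiv:2412.17962 — 2 statements merged into one kernel-verified Lean document; each statement's English description precedes it below -/
import Mathlib

section
/- Let G be a uniquely C4+-saturated graph with at least one triangle and let A be the set of all vertices belonging to some triangle of G. If there exists a vertex at distance 2 from A, then all vertices of G not in A have the same degree in G. -/
open SimpleGraph

/-- The diamond graph `C₄⁺`: a `4`-cycle with one chord, i.e. `K₄` minus an edge. -/
def diamond : SimpleGraph (Fin 4) := (⊤ : SimpleGraph (Fin 4)).deleteEdges {s(0, 1)}

/-- `G'` is a copy of `H` in `G`, i.e. a subgraph of `G` isomorphic to `H`. -/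
def IsCopy {W V : Type*} (H : SimpleGraph W) {G : SimpleGraph V} (G' : G.Subgraph) : Prop :=
  Nonempty (G'.coe ≃g H)

/-- `G` is uniquely `H`-saturated: `G` is `H`-free, and adding any non-edge
creates exactly one copy of `H`. -/
def UniquelySaturated {W V : Type*} (H : SimpleGraph W) (G : SimpleGraph V) : Prop :=
  (∀ G' : G.Subgraph, ¬ IsCopy H G') ∧
    ∀ u v : V, u ≠ v → ¬ G.Adj u v →
      ∃! G' : (G ⊔ SimpleGraph.fromEdgeSet {s(u, v)}).Subgraph, IsCopy H G'

/-- The set of vertices belonging to some triangle of `G`. -/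
def triangleVerts {V : Type*} (G : SimpleGraph V) : Set V :=
  {v | ∃ a b, G.Adj v a ∧ G.Adj v b ∧ G.Adj a b}


/-!
Let `u₀ ∉ A` have no neighbour in `A`. If `x ∉ A` and `y` are distinct and non-adjacent, and
`x` has no neighbour in `A` in case `y ∈ A`, then the new edge `xy` must be the chord of the
unique diamond of `G + xy`, so `x` and `y` have exactly two common neighbours. Adjacent `x, y`
with `x ∉ A` have none. Counting the walks of length three between `u₀` and any `v ∉ A` from
both ends then gives `2 deg u₀ + ε deg v = 2 deg v + ε deg u₀` with `ε ∈ {0, 1}`, so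
`deg u₀ = deg v`.
-/

section

open Finset

variable {V W : Type*}

lemma diamond_adj (i j : Fin 4) : diamond.Adj i j ↔ i ≠ j ∧ s(i, j) ≠ s(0, 1) := by
  simp [diamond]

instance : DecidableRel diamond.Adj := fun i j => decidable_of_iff _ (diamond_adj i j).symm

/-- The three disjuncts say that `ij` is the chord, that `i` is an end of the chord but `j` is
not, and that `j` is an end of the chord but `i` is not (then `k` is the other end). -/
lemma diamond_edge_cases : ∀ i j : Fin 4, diamond.Adj i j → ∃ k l : Fin 4,
    k ≠ i ∧ k ≠ j ∧ l ≠ i ∧ l ≠ j ∧ k ≠ l ∧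
    ((diamond.Adj i k ∧ diamond.Adj i l ∧ diamond.Adj j k ∧ diamond.Adj j l) ∨
      (diamond.Adj i k ∧ diamond.Adj i l ∧ diamond.Adj k l) ∨
      (diamond.Adj j k ∧ diamond.Adj j l ∧ diamond.Adj k l ∧ diamond.Adj i k)) := by
  decide

lemma exists_copy_diamond {G : SimpleGraph V} {u v w z : V} (huv : G.Adj u v) (huw : G.Adj u w)
    (huz : G.Adj u z) (hvw : G.Adj v w) (hvz : G.Adj v z) (hwz : w ≠ z) :
    ∃ f : Copy diamond G, Set.range f = {w, z, u, v} := by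
  refine ⟨⟨⟨![w, z, u, v], fun {i j} h => ?_⟩, fun i j h => ?_⟩, ?_⟩
  · rw [diamond_adj] at h
    fin_cases i <;> fin_cases j <;> simp_all [adj_comm]
  · have := huv.ne; have := huw.ne; have := huz.ne; have := hvw.ne; have := hvz.ne
    fin_cases i <;> fin_cases j <;> simp_all [eq_comm]
  · ext x
    change x ∈ Set.range ![w, z, u, v] ↔ _
    simp only [Matrix.range_cons, Matrix.range_empty, Set.union_empty, Set.singleton_union,
      Set.mem_insert_iff, Set.mem_singleton_iff]

lemma SimpleGraph.Copy.toSubgraph_verts {H : SimpleGraph W} {G : SimpleGraph V} (f : Copy H G) :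
    f.toSubgraph.verts = Set.range f := by
  simp [Copy.toSubgraph]

lemma isCopy_toSubgraph {H : SimpleGraph W} {G : SimpleGraph V} (f : Copy H G) :
    IsCopy H f.toSubgraph :=
  ⟨f.isoToSubgraph.symm⟩

lemma IsCopy.isContained {H : SimpleGraph W} {G : SimpleGraph V} {G' : G.Subgraph}
    (h : IsCopy H G') : H ⊑ G :=
  let ⟨e⟩ := h
  ⟨G'.coeCopy.comp e.symm.toCopy⟩

lemma UniquelySaturated.free {H : SimpleGraph W} {G : SimpleGraph V}
    (hsat : UniquelySaturated H G) : H.Free G := fun h =>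
  let ⟨G', ⟨e⟩⟩ := h.exists_iso_subgraph
  hsat.1 G' ⟨e.symm⟩

lemma SimpleGraph.Copy.adj_of_sup_edge {H : SimpleGraph W} {G : SimpleGraph V} {u v : V}
    (f : Copy H (G ⊔ fromEdgeSet {s(u, v)})) {i j p q : W} (hi : f i = u) (hj : f j = v)
    (hpi : p ≠ i) (hpj : p ≠ j) (hpq : H.Adj p q) : G.Adj (f p) (f q) := by
  have h := f.toHom.map_adj hpq
  rw [sup_adj, fromEdgeSet_adj, Set.mem_singleton_iff, Sym2.eq_iff] at h
  rcases h with h | ⟨⟨hp, -⟩ | ⟨hp, -⟩, -⟩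
  · exact h
  · exact (hpi (f.injective (hp.trans hi.symm))).elim
  · exact (hpj (f.injective (hp.trans hj.symm))).elim

section TriangleVerts

variable {G : SimpleGraph V} {u v : V}

/-- The new edge `uv` has to be the chord of the diamond: were it a side, one of its ends
would lie in a triangle of `G`, and if that end is `v`, then `u` is adjacent to a vertex of that
triangle. -/
lemma exists_commonNeighbors_of_diamond_isContained (hfree : diamond.Free G)
    (h : diamond ⊑ G ⊔ fromEdgeSet {s(u, v)}) (hu : u ∉ triangleVerts G)
    (hv : v ∈ triangleVerts G → ∀ a ∈ triangleVerts G, ¬ G.Adj u a) :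
    ∃ w z, w ≠ z ∧ w ∈ G.commonNeighbors u v ∧ z ∈ G.commonNeighbors u v := by
  obtain ⟨f⟩ := h
  obtain ⟨i, j, hij, hi, hj⟩ : ∃ i j, diamond.Adj i j ∧ f i = u ∧ f j = v := by
    by_contra! hnone
    refine hfree ⟨⟨⟨f, fun {i j} hij => ?_⟩, f.injective⟩⟩
    have h := f.toHom.map_adj hij
    rw [sup_adj, fromEdgeSet_adj, Set.mem_singleton_iff, Sym2.eq_iff] at h
    rcases h with h | ⟨⟨hiu, hjv⟩ | ⟨hiv, hju⟩, -⟩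
    · exact h
    · exact (hnone i j hij hiu hjv).elim
    · exact (hnone j i hij.symm hju hiv).elim
  have hG {p q} (hpi : p ≠ i) (hpj : p ≠ j) (hpq : diamond.Adj p q) : G.Adj (f p) (f q) :=
    f.adj_of_sup_edge hi hj hpi hpj hpq
  obtain ⟨k, l, hki, hkj, hli, hlj, hkl, hcases⟩ := diamond_edge_cases i j hij
  replace hu : f i ∉ triangleVerts G := by rwa [hi]
  replace hv : f j ∈ triangleVerts G → ∀ a ∈ triangleVerts G, ¬ G.Adj (f i) a := by
    rwa [hi, hj]
  suffices ∃ w z, w ≠ z ∧ w ∈ G.commonNeighbors (f i) (f j) ∧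
      z ∈ G.commonNeighbors (f i) (f j) by rwa [hi, hj] at this
  rcases hcases with ⟨hik, hil, hjk, hjl⟩ | ⟨hik, hil, hkl'⟩ | ⟨hjk, hjl, hkl', hik⟩
  · exact ⟨f k, f l, f.injective.ne hkl,
      ⟨(hG hki hkj hik.symm).symm, (hG hki hkj hjk.symm).symm⟩,
      ⟨(hG hli hlj hil.symm).symm, (hG hli hlj hjl.symm).symm⟩⟩
  · exact (hu ⟨f k, f l, (hG hki hkj hik.symm).symm, (hG hli hlj hil.symm).symm,
      hG hki hkj hkl'⟩).elim
  · have hvA : f j ∈ triangleVerts G :=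
      ⟨f k, f l, (hG hki hkj hjk.symm).symm, (hG hli hlj hjl.symm).symm, hG hki hkj hkl'⟩
    have hkA : f k ∈ triangleVerts G :=
      ⟨f j, f l, hG hki hkj hjk.symm, hG hki hkj hkl', (hG hli hlj hjl.symm).symm⟩
    exact (hv hvA (f k) hkA (hG hki hkj hik.symm).symm).elim

/-- Any two common neighbours of `u, v` span a diamond with chord `uv` in `G + uv`, so by
uniqueness there is no third one. -/
lemma UniquelySaturated.eq_or_eq_of_mem_commonNeighbors (hsat : UniquelySaturated diamond G)
    (hne : u ≠ v) (hnadj : ¬ G.Adj u v) {w z t : V} (hwz : w ≠ z)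
    (hw : w ∈ G.commonNeighbors u v) (hz : z ∈ G.commonNeighbors u v)
    (ht : t ∈ G.commonNeighbors u v) : t = w ∨ t = z := by
  by_contra! htwz
  obtain ⟨G', -, huniq⟩ := hsat.2 u v hne hnadj
  have hsup {x y : V} (h : G.Adj x y) : (G ⊔ fromEdgeSet {s(u, v)}).Adj x y := Or.inl h
  have huv : (G ⊔ fromEdgeSet {s(u, v)}).Adj u v := Or.inr ⟨rfl, hne⟩
  obtain ⟨f, hf⟩ := exists_copy_diamond huv (hsup hw.1) (hsup hz.1) (hsup hw.2) (hsup hz.2) hwz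
  obtain ⟨g, hg⟩ := exists_copy_diamond huv (hsup hw.1) (hsup ht.1) (hsup hw.2) (hsup ht.2)
    (Ne.symm htwz.1)
  have hfg : f.toSubgraph = g.toSubgraph :=
    (huniq _ (isCopy_toSubgraph f)).trans (huniq _ (isCopy_toSubgraph g)).symm
  have hz' : z ∈ Set.range g := by
    rw [← g.toSubgraph_verts, ← hfg, f.toSubgraph_verts, hf]
    simp
  rw [hg] at hz'
  rcases hz' with h | h | h | h
  · exact hwz h.symm
  · exact htwz.2 h.symm
  · exact hz.1.ne h.symm
  · exact hz.2.ne h.symm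

lemma UniquelySaturated.exists_commonNeighbors_eq_pair (hsat : UniquelySaturated diamond G)
    (hne : u ≠ v) (hnadj : ¬ G.Adj u v) (hu : u ∉ triangleVerts G)
    (hv : v ∈ triangleVerts G → ∀ a ∈ triangleVerts G, ¬ G.Adj u a) :
    ∃ w z, w ≠ z ∧ G.commonNeighbors u v = {w, z} := by
  obtain ⟨G', hG', -⟩ := hsat.2 u v hne hnadj
  obtain ⟨w, z, hwz, hw, hz⟩ :=
    exists_commonNeighbors_of_diamond_isContained hsat.free hG'.isContained hu hv
  refine ⟨w, z, hwz, Set.Subset.antisymm (fun t ht => ?_) ?_⟩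
  · exact hsat.eq_or_eq_of_mem_commonNeighbors hne hnadj hwz hw hz ht
  · exact Set.insert_subset hw (Set.singleton_subset_iff.mpr hz)

lemma commonNeighbors_eq_empty_of_adj (hu : u ∉ triangleVerts G) (huv : G.Adj u v) :
    G.commonNeighbors u v = ∅ :=
  Set.eq_empty_of_forall_notMem fun t ht => hu ⟨v, t, huv, ht.1, ht.2⟩

variable [Fintype V] [DecidableEq V] [DecidableRel G.Adj]

lemma UniquelySaturated.card_neighborFinset_inter (hsat : UniquelySaturated diamond G)
    (hne : u ≠ v) (hu : u ∉ triangleVerts G)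
    (hv : v ∈ triangleVerts G → ∀ a ∈ triangleVerts G, ¬ G.Adj u a) :
    #(G.neighborFinset u ∩ G.neighborFinset v) = if G.Adj u v then 0 else 2 := by
  have hcoe : (↑(G.neighborFinset u ∩ G.neighborFinset v) : Set V) = G.commonNeighbors u v := by
    rw [coe_inter, coe_neighborFinset, coe_neighborFinset, commonNeighbors_eq]
  split_ifs with huv
  · rw [card_eq_zero, ← coe_eq_empty, hcoe, commonNeighbors_eq_empty_of_adj hu huv]
  · obtain ⟨w, z, hwz, hpair⟩ := hsat.exists_commonNeighbors_eq_pair hne huv hu hv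
    rw [← card_pair hwz]
    congr 1
    rw [← coe_inj, hcoe, hpair, coe_pair]

end TriangleVerts

section Counting

variable {G : SimpleGraph V} [Fintype V] [DecidableEq V] [DecidableRel G.Adj] {u v : V}

/-- Both sides count the walks of length three from `u` to `v`. -/
lemma sum_card_neighborFinset_inter_comm (u v : V) :
    ∑ x ∈ G.neighborFinset u, #(G.neighborFinset x ∩ G.neighborFinset v) =
      ∑ y ∈ G.neighborFinset v, #(G.neighborFinset y ∩ G.neighborFinset u) := by
  convert sum_card_bipartiteAbove_eq_sum_card_bipartiteBelow (s := G.neighborFinset u)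
    (t := G.neighborFinset v) (r := G.Adj) using 3 with x - y - <;> ext <;>
    simp [bipartiteAbove, bipartiteBelow, adj_comm, and_comm]

/-- Stated without subtraction: the summands are `2`, except `0` at the common neighbours of `u`
and `v`, and `deg v` at `v` itself. -/
lemma sum_card_neighborFinset_inter_add
    (h : ∀ x ∈ G.neighborFinset u, x ≠ v →
      #(G.neighborFinset x ∩ G.neighborFinset v) = if G.Adj x v then 0 else 2) :
    ∑ x ∈ G.neighborFinset u, #(G.neighborFinset x ∩ G.neighborFinset v) +
        2 * #(G.neighborFinset u ∩ G.neighborFinset v) + (if G.Adj u v then 2 else 0) =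
      2 * G.degree u + (if G.Adj u v then G.degree v else 0) := by
  have hinter : 2 * #(G.neighborFinset u ∩ G.neighborFinset v) =
      ∑ x ∈ G.neighborFinset u, if G.Adj x v then 2 else 0 := by
    rw [sum_ite, sum_const_zero, add_zero, sum_const, smul_eq_mul, mul_comm]
    congr 2
    ext x
    simp [adj_comm]
  have hself (n : ℕ) :
      (if G.Adj u v then n else 0) = ∑ x ∈ G.neighborFinset u, if x = v then n else 0 := by
    simp only [sum_ite_eq', mem_neighborFinset]
  rw [hinter, hself 2, hself (G.degree v), ← card_neighborFinset_eq_degree, card_eq_sum_ones,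
    mul_sum, ← sum_add_distrib, ← sum_add_distrib, ← sum_add_distrib]
  refine sum_congr rfl fun x hx => ?_
  by_cases hxv : x = v
  · subst hxv
    simp [add_comm]
  · rw [h x hx hxv]
    split_ifs <;> simp

lemma degree_eq_of_card_neighborFinset_inter
    (hu : ∀ x ∈ G.neighborFinset u, x ≠ v →
      #(G.neighborFinset x ∩ G.neighborFinset v) = if G.Adj x v then 0 else 2)
    (hv : ∀ y ∈ G.neighborFinset v, y ≠ u →
      #(G.neighborFinset y ∩ G.neighborFinset u) = if G.Adj y u then 0 else 2) :
    G.degree u = G.degree v := by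
  have huv := sum_card_neighborFinset_inter_add hu
  have hvu := sum_card_neighborFinset_inter_add hv
  rw [sum_card_neighborFinset_inter_comm] at huv
  rw [inter_comm (G.neighborFinset v)] at hvu
  simp only [G.adj_comm v u] at hvu
  split_ifs at huv hvu <;> omega

end Counting

theorem UniquelySaturated.degree_eq_of_notMem_triangleVerts [Fintype V] [DecidableEq V]
    {G : SimpleGraph V} [DecidableRel G.Adj] (hsat : UniquelySaturated diamond G) {u₀ v : V}
    (hu₀ : u₀ ∉ triangleVerts G) (hu₀A : ∀ a ∈ triangleVerts G, ¬ G.Adj u₀ a)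
    (hv : v ∉ triangleVerts G) : G.degree u₀ = G.degree v := by
  refine degree_eq_of_card_neighborFinset_inter (fun x hx hxv => ?_) (fun y _ hyu => ?_)
  · have hxA : x ∉ triangleVerts G := fun h => hu₀A x h ((mem_neighborFinset _ _ _).mp hx)
    exact hsat.card_neighborFinset_inter hxv hxA (absurd · hv)
  · rw [inter_comm]
    simp only [G.adj_comm y u₀]
    exact hsat.card_neighborFinset_inter (Ne.symm hyu) hu₀ fun _ => hu₀A

end

theorem stmt7_general {V : Type*} [Fintype V] (G : SimpleGraph V)
    (hsat : UniquelySaturated diamond G)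
    (hdist2 : ∃ u : V, u ∉ triangleVerts G ∧ (∀ a ∈ triangleVerts G, ¬ G.Adj u a) ∧
      ∃ a ∈ triangleVerts G, G.dist u a = 2) :
    ∀ u v : V, u ∉ triangleVerts G → v ∉ triangleVerts G →
      (G.neighborSet u).ncard = (G.neighborSet v).ncard := by
  classical
  obtain ⟨u₀, hu₀, hu₀A, -⟩ := hdist2
  intro u v hu hv
  simp only [Set.ncard_eq_toFinset_card', ← neighborFinset_def, card_neighborFinset_eq_degree]
  rw [← hsat.degree_eq_of_notMem_triangleVerts hu₀ hu₀A hu,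
    ← hsat.degree_eq_of_notMem_triangleVerts hu₀ hu₀A hv]

theorem stmt7 {V : Type*} [Fintype V] (G : SimpleGraph V)
    (hsat : UniquelySaturated diamond G)
    (htri : ∃ a b c : V, G.Adj a b ∧ G.Adj a c ∧ G.Adj b c)
    (hdist2 : ∃ u : V, u ∉ triangleVerts G ∧ (∀ a ∈ triangleVerts G, ¬ G.Adj u a) ∧
      ∃ a ∈ triangleVerts G, G.dist u a = 2) :
    ∀ u v : V, u ∉ triangleVerts G → v ∉ triangleVerts G →
      (G.neighborSet u).ncard = (G.neighborSet v).ncard :=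
  stmt7_general G hsat hdist2
end

section
/- Let G be a uniquely C4+-saturated graph on n vertices with at least one triangle, and let A be the set of all vertices belonging to some triangle of G. If there exists a vertex at distance 2 from A, then n = t(t+1)/2 + 1, where t is the common degree in G of the vertices not in A. -/
open SimpleGraph

/-!
Fix `u ∉ A` with no neighbour in `A`, and let `N` be its neighbourhood: `N` is independent and
misses `A`. Add a non-edge `ab` such that no endpoint lies in `A` while the other one has a
neighbour in `A`. The new diamond must contain `ab`; if `ab` were an outer edge, the triangle on
the other side of the chord would lie in `G`, putting one endpoint of `ab` into `A` and the
other next to `A`. So `ab` is the chord, and uniqueness of the diamond says exactly that `a` and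
`b` have two common neighbours. Applied to `u` and any `v ∉ {u} ∪ N`, and to pairs inside `N`,
this makes `v ↦ N ∩ N(v)` a bijection onto the `2`-subsets of `N`, so `n = 1 + t + C(t, 2)`.
-/

namespace SimpleGraph

variable {V : Type*}

lemma diamond_adj {i j : Fin 4} : diamond.Adj i j ↔ i ≠ j ∧ s(i, j) ≠ s(0, 1) := by
  simp [diamond]

instance : DecidableRel diamond.Adj := fun _ _ => decidable_of_iff _ diamond_adj.symm

/-- `p q c d` are the images of `0 1 2 3` under a copy of `diamond` in `H`, so `cd` is the chord. -/
def IsDiamondOn (H : SimpleGraph V) (p q c d : V) : Prop :=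
  p ≠ q ∧ H.Adj p c ∧ H.Adj p d ∧ H.Adj q c ∧ H.Adj q d ∧ H.Adj c d

section IsDiamondOn

variable {H : SimpleGraph V} {p q c d : V}

lemma IsDiamondOn.swap_tips (h : IsDiamondOn H p q c d) : IsDiamondOn H q p c d :=
  let ⟨hpq, hpc, hpd, hqc, hqd, hcd⟩ := h
  ⟨hpq.symm, hqc, hqd, hpc, hpd, hcd⟩

lemma IsDiamondOn.swap_chord (h : IsDiamondOn H p q c d) : IsDiamondOn H p q d c :=
  let ⟨hpq, hpc, hpd, hqc, hqd, hcd⟩ := h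
  ⟨hpq, hpd, hpc, hqd, hqc, hcd.symm⟩

lemma isDiamondOn_of_copy (f : Copy diamond H) : IsDiamondOn H (f 0) (f 1) (f 2) (f 3) :=
  ⟨f.injective.ne (by decide), f.toHom.map_adj (by decide), f.toHom.map_adj (by decide),
    f.toHom.map_adj (by decide), f.toHom.map_adj (by decide), f.toHom.map_adj (by decide)⟩

def IsDiamondOn.hom (h : IsDiamondOn H p q c d) : diamond →g H where
  toFun := ![p, q, c, d]
  map_rel' {i j} hij := by
    obtain ⟨hpq, hpc, hpd, hqc, hqd, hcd⟩ := h
    fin_cases i <;> fin_cases j <;> simp_all [diamond_adj, Adj.symm]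

lemma Hom.injective_of_diamond (f : diamond →g H) (h : f 0 ≠ f 1) : Function.Injective f := by
  intro i j hij
  by_contra hne
  by_cases hadj : diamond.Adj i j
  · exact (f.map_adj hadj).ne hij
  · obtain ⟨rfl, rfl⟩ | ⟨rfl, rfl⟩ : (i = 0 ∧ j = 1) ∨ (i = 1 ∧ j = 0) := by
      simpa [diamond_adj, hne, or_iff_not_imp_left] using hadj
    exacts [h hij, h hij.symm]

def IsDiamondOn.copy (h : IsDiamondOn H p q c d) : Copy diamond H :=
  h.hom.toCopy (h.hom.injective_of_diamond h.1)

lemma IsDiamondOn.range_copy (h : IsDiamondOn H p q c d) :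
    Set.range h.copy = {p, q, c, d} := by
  ext x
  simp only [IsDiamondOn.copy, IsDiamondOn.hom, Set.mem_range, Set.mem_insert_iff,
    Set.mem_singleton_iff]
  simp [Fin.exists_fin_succ, eq_comm]

lemma IsDiamondOn.isContained (h : IsDiamondOn H p q c d) : diamond ⊑ H := ⟨h.copy⟩

end IsDiamondOn

variable {G : SimpleGraph V} {a b p q c d x y : V}

lemma adj_of_sup_edge_adj (h : (G ⊔ edge a b).Adj x y) (hne : s(x, y) ≠ s(a, b)) : G.Adj x y := by
  rw [sup_adj, edge_adj] at h
  exact h.resolve_right fun h' => hne (Sym2.eq_iff.2 h'.1)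

lemma isDiamondOn_sup_edge_of_mem_commonNeighbors (hab : a ≠ b) (hpq : p ≠ q)
    (hp : p ∈ G.commonNeighbors a b) (hq : q ∈ G.commonNeighbors a b) :
    IsDiamondOn (G ⊔ edge a b) p q a b := by
  rw [mem_commonNeighbors] at hp hq
  exact ⟨hpq, .inl hp.1.symm, .inl hp.2.symm, .inl hq.1.symm, .inl hq.2.symm,
    .inr (by simp [edge_adj, hab])⟩

lemma IsDiamondOn.sym2_ne_of_sup_edge (hD : IsDiamondOn (G ⊔ edge a b) p q c d)
    (ha : a ∉ triangleVerts G ∨ ∀ w ∈ triangleVerts G, ¬ G.Adj b w)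
    (hb : b ∉ triangleVerts G ∨ ∀ w ∈ triangleVerts G, ¬ G.Adj a w) :
    s(p, c) ≠ s(a, b) := by
  intro hpc_ab
  obtain ⟨hpq, hpc, hpd, hqc, hqd, hcd⟩ := hD
  have hG : ∀ {x y}, (G ⊔ edge a b).Adj x y → s(x, y) ≠ s(p, c) → G.Adj x y := fun h hne =>
    adj_of_sup_edge_adj h (hpc_ab ▸ hne)
  replace hpd := hG hpd (by simp [hpc.ne, hcd.ne'])
  replace hqc := hG hqc (by simp [hpq.symm, hpc.ne'])
  replace hqd := hG hqd (by simp [hpq.symm, hpd.ne'])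
  replace hcd := hG hcd (by simp [hpc.ne', hpd.ne'])
  have hc : c ∈ triangleVerts G := ⟨q, d, hqc.symm, hcd, hqd⟩
  have hd : d ∈ triangleVerts G := ⟨q, c, hqd.symm, hcd.symm, hqc⟩
  rcases Sym2.eq_iff.1 hpc_ab with ⟨rfl, rfl⟩ | ⟨rfl, rfl⟩
  · exact hb.elim (· hc) (· d hd hpd)
  · exact ha.elim (· hc) (· d hd hpd)

lemma IsDiamondOn.mem_commonNeighbors_of_sup_edge (hfree : diamond.Free G)
    (hD : IsDiamondOn (G ⊔ edge a b) p q c d)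
    (ha : a ∉ triangleVerts G ∨ ∀ w ∈ triangleVerts G, ¬ G.Adj b w)
    (hb : b ∉ triangleVerts G ∨ ∀ w ∈ triangleVerts G, ¬ G.Adj a w) :
    p ∈ G.commonNeighbors a b ∧ q ∈ G.commonNeighbors a b := by
  have hpc := hD.sym2_ne_of_sup_edge ha hb
  have hqc := hD.swap_tips.sym2_ne_of_sup_edge ha hb
  have hpd := hD.swap_chord.sym2_ne_of_sup_edge ha hb
  have hqd := hD.swap_tips.swap_chord.sym2_ne_of_sup_edge ha hb
  obtain ⟨hpq, hpc', hpd', hqc', hqd', hcd'⟩ := hD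
  replace hpc := adj_of_sup_edge_adj hpc' hpc
  replace hqc := adj_of_sup_edge_adj hqc' hqc
  replace hpd := adj_of_sup_edge_adj hpd' hpd
  replace hqd := adj_of_sup_edge_adj hqd' hqd
  have hcd : s(c, d) = s(a, b) := by
    by_contra hne
    exact hfree (IsDiamondOn.isContained ⟨hpq, hpc, hpd, hqc, hqd, adj_of_sup_edge_adj hcd' hne⟩)
  simp only [mem_commonNeighbors]
  rcases Sym2.eq_iff.1 hcd with ⟨rfl, rfl⟩ | ⟨rfl, rfl⟩
  · exact ⟨⟨hpc.symm, hpd.symm⟩, hqc.symm, hqd.symm⟩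
  · exact ⟨⟨hpd.symm, hpc.symm⟩, hqd.symm, hqc.symm⟩

end SimpleGraph

lemma isCopy_iff_exists_toSubgraph_eq {V W : Type*} {H : SimpleGraph W} {G : SimpleGraph V}
    (D : G.Subgraph) : IsCopy H D ↔ ∃ f : Copy H G, f.toSubgraph = D := by
  rw [← Set.mem_range, Copy.range_toSubgraph]
  exact ⟨fun ⟨e⟩ => ⟨e.symm⟩, fun ⟨e⟩ => ⟨e.symm⟩⟩

namespace UniquelySaturated

variable {V W : Type*} {H : SimpleGraph W} {G : SimpleGraph V} {a b : V}

lemma free_s8 (hsat : UniquelySaturated H G) : H.Free G := fun ⟨f⟩ =>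
  hsat.1 _ ((isCopy_iff_exists_toSubgraph_eq _).2 ⟨f, rfl⟩)

lemma isContained_sup_edge (hsat : UniquelySaturated H G) (hab : a ≠ b) (hnadj : ¬ G.Adj a b) :
    H ⊑ G ⊔ edge a b := by
  obtain ⟨D, hD, -⟩ := hsat.2 a b hab hnadj
  obtain ⟨f, -⟩ := (isCopy_iff_exists_toSubgraph_eq D).1 hD
  exact ⟨f⟩

lemma range_eq_of_copy_sup_edge (hsat : UniquelySaturated H G) (hab : a ≠ b)
    (hnadj : ¬ G.Adj a b) (f g : Copy H (G ⊔ edge a b)) : Set.range f = Set.range g := by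
  obtain ⟨D, -, huniq⟩ := hsat.2 a b hab hnadj
  have hf := huniq _ ((isCopy_iff_exists_toSubgraph_eq _).2 ⟨f, rfl⟩)
  have hg := huniq _ ((isCopy_iff_exists_toSubgraph_eq _).2 ⟨g, rfl⟩)
  have hverts := congrArg Subgraph.verts (hf.trans hg.symm)
  simp only [Subgraph.map_verts, Subgraph.verts_top, Set.image_univ] at hverts
  exact hverts

lemma ncard_commonNeighbors_eq_two (hsat : UniquelySaturated diamond G) (hab : a ≠ b)
    (hnadj : ¬ G.Adj a b)
    (ha : a ∉ triangleVerts G ∨ ∀ w ∈ triangleVerts G, ¬ G.Adj b w)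
    (hb : b ∉ triangleVerts G ∨ ∀ w ∈ triangleVerts G, ¬ G.Adj a w) :
    (G.commonNeighbors a b).ncard = 2 := by
  obtain ⟨f⟩ := hsat.isContained_sup_edge hab hnadj
  obtain ⟨hp, hq⟩ :=
    (isDiamondOn_of_copy f).mem_commonNeighbors_of_sup_edge hsat.free_s8 ha hb
  have hpq : f 0 ≠ f 1 := (isDiamondOn_of_copy f).1
  suffices h : G.commonNeighbors a b = {f 0, f 1} by rw [h, Set.ncard_pair hpq]
  refine Set.Subset.antisymm (fun r hr => ?_) (Set.insert_subset hp (Set.singleton_subset_iff.2 hq))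
  by_contra hr'
  simp only [Set.mem_insert_iff, Set.mem_singleton_iff, not_or] at hr'
  -- a third common neighbour `r` would span a second diamond with the chord `ab`
  have hD := isDiamondOn_sup_edge_of_mem_commonNeighbors hab hpq hp hq
  have hD' := isDiamondOn_sup_edge_of_mem_commonNeighbors hab (Ne.symm hr'.1) hp hr
  have hverts := hsat.range_eq_of_copy_sup_edge hab hnadj hD.copy hD'.copy
  rw [hD.range_copy, hD'.range_copy] at hverts
  have hq_mem : f 1 ∈ ({f 0, r, a, b} : Set V) := hverts ▸ by simp
  rw [mem_commonNeighbors] at hq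
  simp only [Set.mem_insert_iff, Set.mem_singleton_iff] at hq_mem
  rcases hq_mem with h | h | h | h
  exacts [hpq h.symm, hr'.2 h.symm, hq.1.ne' h, hq.2.ne' h]

end UniquelySaturated
lemma Set.eq_of_mem_of_ncard_eq_two {α : Type*} {s : Set α} {u v w : α} (hs : s.ncard = 2)
    (hu : u ∈ s) (hv : v ∈ s) (hw : w ∈ s) (huv : u ≠ v) (huw : u ≠ w) : v = w := by
  obtain ⟨x, y, -, rfl⟩ := Set.ncard_eq_two.1 hs
  simp only [Set.mem_insert_iff, Set.mem_singleton_iff] at hu hv hw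
  grind

namespace SimpleGraph

variable {V : Type*} {G : SimpleGraph V}

lemma card_compl_insert_neighborFinset [Fintype V] [DecidableEq V] [DecidableRel G.Adj]
    (u : V) (hindep : G.IsIndepSet (G.neighborSet u))
    (hout : ∀ v, v ≠ u → ¬ G.Adj u v → (G.commonNeighbors u v).ncard = 2)
    (hin : ∀ x y, G.Adj u x → G.Adj u y → x ≠ y → (G.commonNeighbors x y).ncard = 2) :
    (insert u (G.neighborFinset u))ᶜ.card = (G.degree u).choose 2 := by
  set N := G.neighborFinset u
  have hS (v : V) : ((N ∩ G.neighborFinset v : Finset V) : Set V) = G.commonNeighbors u v := by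
    ext; simp [N, mem_commonNeighbors]
  have hScard (v : V) : (N ∩ G.neighborFinset v).card = (G.commonNeighbors u v).ncard := by
    rw [← hS, Set.ncard_coe_finset]
  have hcompl {v : V} : v ∈ (insert u N)ᶜ ↔ v ≠ u ∧ ¬ G.Adj u v := by simp [N]
  rw [← card_neighborFinset_eq_degree, ← Finset.card_powersetCard]
  refine Finset.card_bij (fun v _ => N ∩ G.neighborFinset v) (fun v hv => ?_)
    (fun v hv v' hv' hvv' => ?_) (fun s hs => ?_)
  · rw [hcompl] at hv
    rw [Finset.mem_powersetCard, hScard]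
    exact ⟨Finset.inter_subset_left, hout v hv.1 hv.2⟩
  · rw [hcompl] at hv hv'
    obtain ⟨x, y, hxy, hxy_eq⟩ := Set.ncard_eq_two.1 (hout v hv.1 hv.2)
    have hv'_eq : G.commonNeighbors u v' = {x, y} := by rw [← hS, ← hvv', hS, hxy_eq]
    have hx : x ∈ G.commonNeighbors u v := by simp [hxy_eq]
    have hy : y ∈ G.commonNeighbors u v := by simp [hxy_eq]
    have hx' : x ∈ G.commonNeighbors u v' := by simp [hv'_eq]
    have hy' : y ∈ G.commonNeighbors u v' := by simp [hv'_eq]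
    rw [mem_commonNeighbors] at hx hy hx' hy'
    exact Set.eq_of_mem_of_ncard_eq_two (hin x y hx.1 hy.1 hxy)
      ⟨hx.1.symm, hy.1.symm⟩ ⟨hx.2.symm, hy.2.symm⟩ ⟨hx'.2.symm, hy'.2.symm⟩ hv.1.symm hv'.1.symm
  · obtain ⟨hsN, hs2⟩ := Finset.mem_powersetCard.1 hs
    obtain ⟨x, y, hxy, rfl⟩ := Finset.card_eq_two.1 hs2
    have hx : G.Adj u x := by simpa [N] using hsN (by simp)
    have hy : G.Adj u y := by simpa [N] using hsN (by simp)
    obtain ⟨v, hv, hvu⟩ :=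
      Set.exists_ne_of_one_lt_ncard (by rw [hin x y hx hy hxy]; norm_num) u
    rw [mem_commonNeighbors] at hv
    have hvN : ¬ G.Adj u v := fun huv => hindep huv hx hv.1.ne' hv.1.symm
    refine ⟨v, hcompl.2 ⟨hvu, hvN⟩, (Finset.eq_of_subset_of_card_le ?_ ?_).symm⟩
    · intro z hz
      simp only [Finset.mem_insert, Finset.mem_singleton] at hz
      rcases hz with rfl | rfl <;> simp [N, *, hv.1.symm, hv.2.symm]
    · rw [hScard, hout v hvu hvN, Finset.card_pair hxy]

lemma card_eq_choose_of_ncard_commonNeighbors [Fintype V] [DecidableEq V] [DecidableRel G.Adj]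
    (u : V) (hindep : G.IsIndepSet (G.neighborSet u))
    (hout : ∀ v, v ≠ u → ¬ G.Adj u v → (G.commonNeighbors u v).ncard = 2)
    (hin : ∀ x y, G.Adj u x → G.Adj u y → x ≠ y → (G.commonNeighbors x y).ncard = 2) :
    Fintype.card V = (G.degree u + 1).choose 2 + 1 := by
  calc Fintype.card V
      = (insert u (G.neighborFinset u))ᶜ.card + (insert u (G.neighborFinset u)).card :=
        (Finset.card_compl_add_card _).symm
    _ = (G.degree u).choose 2 + (G.degree u + 1) := by
      rw [card_compl_insert_neighborFinset u hindep hout hin,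
        Finset.card_insert_of_notMem (by simp), card_neighborFinset_eq_degree]
    _ = (G.degree u + 1).choose 2 + 1 := by
      rw [Nat.choose_succ_succ, Nat.choose_one_right]; ring

end SimpleGraph

theorem stmt8_general {V : Type*} [Fintype V] (G : SimpleGraph V)
    (hsat : UniquelySaturated diamond G)
    (hdist2 : ∃ u : V, u ∉ triangleVerts G ∧ (∀ a ∈ triangleVerts G, ¬ G.Adj u a) ∧
      ∃ a ∈ triangleVerts G, G.dist u a = 2)
    (t : ℕ) (ht : ∀ u : V, u ∉ triangleVerts G → (G.neighborSet u).ncard = t) :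
    Fintype.card V = t * (t + 1) / 2 + 1 := by
  classical
  obtain ⟨u, huA, hu_nadj, -⟩ := hdist2
  have hindep : G.IsIndepSet (G.neighborSet u) := fun x hx y hy _ hxy => huA ⟨x, y, hx, hy, hxy⟩
  have hNA {x : V} (hx : G.Adj u x) : x ∉ triangleVerts G := fun hxA => hu_nadj x hxA hx
  have hcard := card_eq_choose_of_ncard_commonNeighbors u hindep
    (fun v hvu hv => hsat.ncard_commonNeighbors_eq_two hvu.symm hv (.inl huA) (.inr hu_nadj))
    (fun x y hx hy hxy => hsat.ncard_commonNeighbors_eq_two hxy (hindep hx hy hxy)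
      (.inl (hNA hx)) (.inl (hNA hy)))
  have hdeg : G.degree u = t := by
    rw [← ht u huA, ← card_neighborFinset_eq_degree, neighborFinset_def, Set.ncard_eq_toFinset_card']
  rw [hcard, hdeg, Nat.choose_two_right, Nat.add_sub_cancel, mul_comm]

theorem stmt8 {V : Type*} [Fintype V] (G : SimpleGraph V)
    (hsat : UniquelySaturated diamond G)
    (htri : ∃ a b c : V, G.Adj a b ∧ G.Adj a c ∧ G.Adj b c)
    (hdist2 : ∃ u : V, u ∉ triangleVerts G ∧ (∀ a ∈ triangleVerts G, ¬ G.Adj u a) ∧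
      ∃ a ∈ triangleVerts G, G.dist u a = 2)
    (t : ℕ) (ht : ∀ u : V, u ∉ triangleVerts G → (G.neighborSet u).ncard = t) :
    Fintype.card V = t * (t + 1) / 2 + 1 :=
  stmt8_general G hsat hdist2 t ht
end
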